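/- Stabilization preserves the cover relation of the dominance-type order on configurations: if d is obtained from c by moving a single chip one vertex to the right (i.e., c = c' + δ_i and d = c' + δ_{i+1} for some configuration c' and vertex i), then stab(d) is obtained from stab(c) by moving a single chip one vertex to the right. -/
import Mathlib

/-- `c'` is obtained from `c` by firing at vertex `j`. -/
def FireAt (c : ℤ → ℕ) (j : ℤ) (c' : ℤ → ℕ) : Prop :=
  2 ≤ c j ∧ c' (j - 1) = c (j - 1) + 1 ∧ c' (j + 1) = c (j + 1) + 1 ∧ c' j = c j - 2 ∧
    ∀ i : ℤ, i ≠ j - 1 → i ≠ j → i ≠ j + 1 → c' i = c i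

/-- a single chip-firing move -/
def Step (c c' : ℤ → ℕ) : Prop := ∃ j, FireAt c j c'

/-- reachability by a (possibly empty) sequence of firings -/
def Reaches : (ℤ → ℕ) → (ℤ → ℕ) → Prop := Relation.ReflTransGen Step

/-- a configuration is stable if no vertex has two chips -/
def Stable (c : ℤ → ℕ) : Prop := ∀ i : ℤ, c i ≤ 1

/-- result of firing at `j` -/
def fire (j : ℤ) (c : ℤ → ℕ) : ℤ → ℕ :=
  fun x => if x = j - 1 ∨ x = j + 1 then c x + 1 else if x = j then c x - 2 else c x

lemma fire_sub1 (j : ℤ) (c : ℤ → ℕ) : fire j c (j - 1) = c (j - 1) + 1 := by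
  simp [fire]

lemma fire_add1 (j : ℤ) (c : ℤ → ℕ) : fire j c (j + 1) = c (j + 1) + 1 := by
  rw [fire, if_pos (Or.inr rfl)]

lemma fire_self (j : ℤ) (c : ℤ → ℕ) : fire j c j = c j - 2 := by
  rw [fire, if_neg (by omega), if_pos rfl]

lemma fire_other (j : ℤ) (c : ℤ → ℕ) {x : ℤ} (h1 : x ≠ j - 1) (h2 : x ≠ j) (h3 : x ≠ j + 1) :
    fire j c x = c x := by
  rw [fire, if_neg (by tauto), if_neg h2]

lemma fireAt_fire {c : ℤ → ℕ} {j : ℤ} (h : 2 ≤ c j) : FireAt c j (fire j c) :=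
  ⟨h, fire_sub1 j c, fire_add1 j c, fire_self j c, fun _ h1 h2 h3 => fire_other j c h1 h2 h3⟩

lemma step_fire {c : ℤ → ℕ} {j : ℤ} (h : 2 ≤ c j) : Step c (fire j c) := ⟨j, fireAt_fire h⟩

lemma fireAt_eq {c c' : ℤ → ℕ} {j : ℤ} (h : FireAt c j c') : c' = fire j c := by
  obtain ⟨h2, hm, hp, hs, ho⟩ := h
  funext x
  rcases eq_or_ne x (j - 1) with rfl | h1
  · rw [fire_sub1]; exact hm
  rcases eq_or_ne x j with rfl | hj
  · rw [fire_self]; exact hs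
  rcases eq_or_ne x (j + 1) with rfl | hp1
  · rw [fire_add1]; exact hp
  · rw [fire_other j c h1 hj hp1]; exact ho x h1 hj hp1

lemma fire_comm (a : ℤ → ℕ) {j k : ℤ} (hj : 2 ≤ a j) (hk : 2 ≤ a k) (hjk : j ≠ k) :
    fire k (fire j a) = fire j (fire k a) := by
  funext x
  rcases eq_or_ne x j with rfl | hxj
  · simp only [fire]; split_ifs <;> omega
  rcases eq_or_ne x k with rfl | hxk
  · simp only [fire]; split_ifs <;> omega
  · simp only [fire]; split_ifs <;> omega

lemma diamond : ∀ a b c : ℤ → ℕ, Step a b → Step a c →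
    ∃ d, Relation.ReflGen Step b d ∧ Relation.ReflTransGen Step c d := by
  rintro a b c ⟨j, hj⟩ ⟨k, hk⟩
  have hb := fireAt_eq hj
  have hc := fireAt_eq hk
  subst hb; subst hc
  have h2j := hj.1
  have h2k := hk.1
  rcases eq_or_ne j k with rfl | hjk
  · exact ⟨fire j a, Relation.ReflGen.refl, Relation.ReflTransGen.refl⟩
  · refine ⟨fire k (fire j a), ?_, ?_⟩
    · apply Relation.ReflGen.single
      refine step_fire ?_
      rw [fire]; split_ifs <;> omega
    · rw [fire_comm a hj.1 hk.1 hjk]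
      apply Relation.ReflTransGen.single
      refine step_fire ?_
      rw [fire]; split_ifs <;> omega

lemma stable_reaches_eq {c w : ℤ → ℕ} (h : Stable c) (r : Reaches c w) : w = c := by
  induction r using Relation.ReflTransGen.head_induction_on with
  | refl => rfl
  | head h' _ _ =>
    obtain ⟨j, h2, _⟩ := h'
    exact absurd (h j) (by omega)

lemma stab_unique {x y z : ℤ → ℕ} (hy : Reaches x y) (hz : Reaches x z)
    (sy : Stable y) (sz : Stable z) : y = z := by
  obtain ⟨w, hyw, hzw⟩ := Relation.church_rosser diamond hy hz
  rw [stable_reaches_eq sy hyw] at hzw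
  exact stable_reaches_eq sz hzw
lemma fire_add {e : ℤ → ℕ} (g : ℤ → ℕ) {k : ℤ} (hk : 2 ≤ e k) :
    fire k (fun x => e x + g x) = fun x => fire k e x + g x := by
  funext x
  rcases eq_or_ne x k with rfl | hxk
  · simp only [fire]; split_ifs <;> first | omega | tauto
  · simp only [fire]; split_ifs <;> first | omega | tauto

lemma cascadeR (n : ℕ) : ∀ c : ℤ → ℕ, ∀ s b : ℤ, (b - s).toNat = n → s < b → c s = 2 →
    (∀ x, s < x → x < b → c x = 1) → c b = 0 →
    Reaches c (fun x => if x = s - 1 then c (s - 1) + 1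
      else if s ≤ x ∧ x ≤ b then (if x = b - 1 then 0 else 1) else c x) := by
  induction n using Nat.strong_induction_on with
  | _ n ih =>
  intro c s b hn hsb h2 h1 h0
  have hstep : Step c (fire s c) := step_fire (by omega)
  rcases eq_or_ne b (s + 1) with rfl | hb
  · have heq : (fun x => if x = s - 1 then c (s - 1) + 1
        else if s ≤ x ∧ x ≤ s + 1 then (if x = s + 1 - 1 then 0 else 1) else c x) = fire s c := by
      funext x
      rcases eq_or_ne x (s - 1) with rfl | hA
      · simp only [fire]; split_ifs <;> first | omega | tauto
      rcases eq_or_ne x s with rfl | hB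
      · simp only [fire]; split_ifs <;> first | omega | tauto
      rcases eq_or_ne x (s + 1) with rfl | hC
      · simp only [fire]; split_ifs <;> first | omega | tauto
      · simp only [fire]; split_ifs <;> first | omega | tauto
    exact heq ▸ Relation.ReflTransGen.single hstep
  · have hsb2 : s + 1 < b := by omega
    have e2 : fire s c (s + 1) = 2 := by
      rw [fire_add1, h1 (s + 1) (by omega) (by omega)]
    have e1 : ∀ x, s + 1 < x → x < b → fire s c x = 1 := fun x hx1 hx2 => by
      rw [fire_other s c (by omega) (by omega) (by omega)]; exact h1 x (by omega) hx2
    have e0 : fire s c b = 0 := by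
      rw [fire_other s c (by omega) (by omega) (by omega)]; exact h0
    have hr := ih (b - (s + 1)).toNat (by omega) (fire s c) (s + 1) b rfl (by omega) e2 e1 e0
    refine Relation.ReflTransGen.head hstep ?_
    have heq : (fun x => if x = s + 1 - 1 then fire s c (s + 1 - 1) + 1
        else if s + 1 ≤ x ∧ x ≤ b then (if x = b - 1 then 0 else 1) else fire s c x)
        = (fun x => if x = s - 1 then c (s - 1) + 1
        else if s ≤ x ∧ x ≤ b then (if x = b - 1 then 0 else 1) else c x) := by
      funext x
      simp only [add_sub_cancel_right]
      rcases eq_or_ne x (s - 1) with rfl | hA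
      · simp only [fire]; split_ifs <;> first | omega | tauto
      rcases eq_or_ne x s with rfl | hB
      · simp only [fire]; split_ifs <;> first | omega | tauto
      rcases eq_or_ne x b with rfl | hC
      · simp only [fire]; split_ifs <;> first | omega | tauto
      by_cases hx : s < x ∧ x < b
      · have hcx := h1 x hx.1 hx.2; simp only [fire]; split_ifs <;> first | omega | tauto
      · simp only [fire]; split_ifs <;> first | omega | tauto
    exact heq ▸ hr
lemma cascadeL (n : ℕ) : ∀ c : ℤ → ℕ, ∀ a t : ℤ, (t - a).toNat = n → a < t → c t = 2 →
    (∀ x, a < x → x < t → c x = 1) → c a = 0 →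
    Reaches c (fun x => if x = t + 1 then c (t + 1) + 1
      else if a ≤ x ∧ x ≤ t then (if x = a + 1 then 0 else 1) else c x) := by
  induction n using Nat.strong_induction_on with
  | _ n ih =>
  intro c a t hn hat h2 h1 h0
  have hstep : Step c (fire t c) := step_fire (by omega)
  rcases eq_or_ne a (t - 1) with rfl | ha
  · have heq : (fun x => if x = t + 1 then c (t + 1) + 1
        else if t - 1 ≤ x ∧ x ≤ t then (if x = t - 1 + 1 then 0 else 1) else c x) = fire t c := by
      funext x
      rcases eq_or_ne x (t - 1) with rfl | hA
      · simp only [fire]; split_ifs <;> first | omega | tauto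
      rcases eq_or_ne x t with rfl | hB
      · simp only [fire]; split_ifs <;> first | omega | tauto
      rcases eq_or_ne x (t + 1) with rfl | hC
      · simp only [fire]; split_ifs <;> first | omega | tauto
      · simp only [fire]; split_ifs <;> first | omega | tauto
    exact heq ▸ Relation.ReflTransGen.single hstep
  · have hat2 : a < t - 1 := by omega
    have e2 : fire t c (t - 1) = 2 := by
      rw [fire_sub1, h1 (t - 1) (by omega) (by omega)]
    have e1 : ∀ x, a < x → x < t - 1 → fire t c x = 1 := fun x hx1 hx2 => by
      rw [fire_other t c (by omega) (by omega) (by omega)]; exact h1 x hx1 (by omega)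
    have e0 : fire t c a = 0 := by
      rw [fire_other t c (by omega) (by omega) (by omega)]; exact h0
    have hr := ih (t - 1 - a).toNat (by omega) (fire t c) a (t - 1) rfl (by omega) e2 e1 e0
    refine Relation.ReflTransGen.head hstep ?_
    have heq : (fun x => if x = t - 1 + 1 then fire t c (t - 1 + 1) + 1
        else if a ≤ x ∧ x ≤ t - 1 then (if x = a + 1 then 0 else 1) else fire t c x)
        = (fun x => if x = t + 1 then c (t + 1) + 1
        else if a ≤ x ∧ x ≤ t then (if x = a + 1 then 0 else 1) else c x) := by
      funext x
      simp only [Int.sub_add_cancel]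
      rcases eq_or_ne x (t + 1) with rfl | hA
      · simp only [fire]; split_ifs <;> first | omega | tauto
      rcases eq_or_ne x t with rfl | hB
      · simp only [fire]; split_ifs <;> first | omega | tauto
      rcases eq_or_ne x a with rfl | hC
      · simp only [fire]; split_ifs <;> first | omega | tauto
      by_cases hx : a < x ∧ x < t
      · have hcx := h1 x hx.1 hx.2; simp only [fire]; split_ifs <;> first | omega | tauto
      · simp only [fire]; split_ifs <;> first | omega | tauto
    exact heq ▸ hr
lemma main_cascade (n : ℕ) : ∀ c : ℤ → ℕ, ∀ a i b : ℤ, (b - a).toNat = n → a < i → i < b →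
    c a = 0 → c b = 0 → (∀ x, a < x → x < b → c x = 1) →
    Reaches (fun x => c x + if x = i then 1 else 0)
      (fun x => if a ≤ x ∧ x ≤ b then (if x = a + b - i then 0 else 1) else c x) := by
  induction n using Nat.strong_induction_on with
  | _ n ih =>
  intro c a i b hn ha hb h0a h0b h1
  have hci : c i = 1 := h1 i ha hb
  set cδ : ℤ → ℕ := (fun x => c x + if x = i then 1 else 0) with hcd
  have hδi : cδ i = 2 := by rw [hcd]; simp [hci]
  have hδo : ∀ x, x ≠ i → cδ x = c x := fun x hx => by rw [hcd]; simp [hx]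
  have hstep : Step cδ (fire i cδ) := step_fire (by omega)
  have f_m : fire i cδ (i - 1) = c (i - 1) + 1 := by
    rw [fire_sub1, hδo (i - 1) (by omega)]
  have f_i : fire i cδ i = 0 := by rw [fire_self, hδi]
  have f_p : fire i cδ (i + 1) = c (i + 1) + 1 := by
    rw [fire_add1, hδo (i + 1) (by omega)]
  have f_o : ∀ x, x ≠ i - 1 → x ≠ i → x ≠ i + 1 → fire i cδ x = c x := fun x h1' h2' h3' => by
    rw [fire_other i cδ h1' h2' h3', hδo x h2']
  rcases eq_or_ne a (i - 1) with rfl | ha'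
  · rcases eq_or_ne b (i + 1) with rfl | hb'
    · -- base: interval of length 2
      have heq : (fun x => if i - 1 ≤ x ∧ x ≤ i + 1 then (if x = i - 1 + (i + 1) - i then 0 else 1)
          else c x) = fire i cδ := by
        funext x
        rcases eq_or_ne x (i - 1) with rfl | hA
        · rw [f_m]; split_ifs <;> omega
        rcases eq_or_ne x i with rfl | hB
        · rw [f_i]; split_ifs <;> omega
        rcases eq_or_ne x (i + 1) with rfl | hC
        · rw [f_p]; split_ifs <;> omega
        · rw [f_o x hA hB hC]; split_ifs <;> omega
      exact heq ▸ Relation.ReflTransGen.single hstep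
    · -- a = i - 1 < i, i + 1 < b : only right cascade
      have hb2 : i + 1 < b := by omega
      have e2 : fire i cδ (i + 1) = 2 := by rw [f_p, h1 (i + 1) (by omega) hb2]
      have e1 : ∀ x, i + 1 < x → x < b → fire i cδ x = 1 := fun x hx1 hx2 => by
        rw [f_o x (by omega) (by omega) (by omega)]; exact h1 x (by omega) hx2
      have e0 : fire i cδ b = 0 := by
        rw [f_o b (by omega) (by omega) (by omega)]; exact h0b
      have hr := cascadeR (b - (i + 1)).toNat (fire i cδ) (i + 1) b rfl hb2 e2 e1 e0
      refine Relation.ReflTransGen.head hstep ?_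
      have heq : (fun x => if x = i + 1 - 1 then fire i cδ (i + 1 - 1) + 1
          else if i + 1 ≤ x ∧ x ≤ b then (if x = b - 1 then 0 else 1) else fire i cδ x)
          = (fun x => if i - 1 ≤ x ∧ x ≤ b then (if x = i - 1 + b - i then 0 else 1) else c x) := by
        funext x
        simp only [add_sub_cancel_right]
        rcases eq_or_ne x (i - 1) with rfl | hA
        · rw [f_i, f_m]; split_ifs <;> omega
        rcases eq_or_ne x i with rfl | hB
        · rw [f_i]; split_ifs <;> omega
        rcases eq_or_ne x (i + 1) with rfl | hC
        · have := h1 (i + 1) (by omega) hb2; rw [f_i, f_p]; split_ifs <;> omega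
        rcases eq_or_ne b x with rfl | hD
        · rw [f_i, f_o b (by omega) (by omega) (by omega)]; split_ifs <;> omega
        · rw [f_i, f_o x hA hB hC]
          by_cases hx : i + 1 < x ∧ x < b
          · have := h1 x (by omega) hx.2; split_ifs <;> omega
          · split_ifs <;> omega
      exact heq ▸ hr
  · rcases eq_or_ne b (i + 1) with rfl | hb'
    · -- a < i - 1, b = i + 1 : only left cascade
      have ha2 : a < i - 1 := by omega
      have e2 : fire i cδ (i - 1) = 2 := by rw [f_m, h1 (i - 1) ha2 (by omega)]
      have e1 : ∀ x, a < x → x < i - 1 → fire i cδ x = 1 := fun x hx1 hx2 => by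
        rw [f_o x (by omega) (by omega) (by omega)]; exact h1 x hx1 (by omega)
      have e0 : fire i cδ a = 0 := by
        rw [f_o a (by omega) (by omega) (by omega)]; exact h0a
      have hr := cascadeL (i - 1 - a).toNat (fire i cδ) a (i - 1) rfl ha2 e2 e1 e0
      refine Relation.ReflTransGen.head hstep ?_
      have heq : (fun x => if x = i - 1 + 1 then fire i cδ (i - 1 + 1) + 1
          else if a ≤ x ∧ x ≤ i - 1 then (if x = a + 1 then 0 else 1) else fire i cδ x)
          = (fun x => if a ≤ x ∧ x ≤ i + 1 then (if x = a + (i + 1) - i then 0 else 1) else c x) := by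
        funext x
        simp only [Int.sub_add_cancel]
        rcases eq_or_ne x (i + 1) with rfl | hA
        · rw [f_i, f_p]; split_ifs <;> omega
        rcases eq_or_ne x i with rfl | hB
        · rw [f_i]; split_ifs <;> omega
        rcases eq_or_ne x (i - 1) with rfl | hC
        · have := h1 (i - 1) ha2 (by omega); rw [f_i, f_m]; split_ifs <;> omega
        rcases eq_or_ne a x with rfl | hD
        · rw [f_i, f_o a (by omega) (by omega) (by omega)]; split_ifs <;> omega
        · rw [f_i, f_o x hC hB hA]
          by_cases hx : a < x ∧ x < i - 1
          · have := h1 x hx.1 (by omega); split_ifs <;> omega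
          · split_ifs <;> omega
      exact heq ▸ hr
    · -- a < i - 1 and i + 1 < b : right cascade, then recurse
      have ha2 : a < i - 1 := by omega
      have hb2 : i + 1 < b := by omega
      have e2 : fire i cδ (i + 1) = 2 := by rw [f_p, h1 (i + 1) (by omega) hb2]
      have e1 : ∀ x, i + 1 < x → x < b → fire i cδ x = 1 := fun x hx1 hx2 => by
        rw [f_o x (by omega) (by omega) (by omega)]; exact h1 x (by omega) hx2
      have e0 : fire i cδ b = 0 := by
        rw [f_o b (by omega) (by omega) (by omega)]; exact h0b
      have hr1 := cascadeR (b - (i + 1)).toNat (fire i cδ) (i + 1) b rfl hb2 e2 e1 e0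
      -- normalize the cascadeR target
      set g : ℤ → ℕ := (fun x => if x = i then 1 else if i + 1 ≤ x ∧ x ≤ b then
          (if x = b - 1 then 0 else 1) else fire i cδ x) with hgd
      have hr1' : Reaches (fire i cδ) g := by
        have heq : (fun x => if x = i + 1 - 1 then fire i cδ (i + 1 - 1) + 1
            else if i + 1 ≤ x ∧ x ≤ b then (if x = b - 1 then 0 else 1) else fire i cδ x) = g := by
          funext x
          simp only [add_sub_cancel_right, f_i, hgd]
        exact heq ▸ hr1
      -- the remaining configuration is c2 + one chip at i - 1
      set c2 : ℤ → ℕ := (fun x => if x = i - 1 then 1 else g x) with hc2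
      have hgc2 : g = (fun x => c2 x + if x = i - 1 then 1 else 0) := by
        funext x
        rcases eq_or_ne x (i - 1) with rfl | hA
        · have hv := h1 (i - 1) ha2 (by omega)
          simp only [hc2, hgd, f_m]
          split_ifs <;> first | omega | tauto
        · simp only [hc2, hgd]
          split_ifs <;> first | omega | tauto
      have c2a : c2 a = 0 := by
        have hv : fire i cδ a = c a := f_o a (by omega) (by omega) (by omega)
        simp only [hc2, hgd, hv]
        split_ifs <;> first | omega | tauto
      have c2b : c2 (b - 1) = 0 := by
        simp only [hc2, hgd]
        split_ifs <;> first | omega | tauto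
      have c2ones : ∀ x, a < x → x < b - 1 → c2 x = 1 := by
        intro x hx1 hx2
        rcases eq_or_ne x (i - 1) with rfl | hA
        · simp only [hc2]; split_ifs <;> first | omega | tauto
        rcases eq_or_ne x i with rfl | hB
        · simp only [hc2, hgd]; split_ifs <;> first | omega | tauto
        by_cases hx : i + 1 ≤ x
        · simp only [hc2, hgd]; split_ifs <;> first | omega | tauto
        · have hv : fire i cδ x = c x := f_o x hA hB (by omega)
          have hcx := h1 x hx1 (by omega)
          simp only [hc2, hgd, hv]
          split_ifs <;> first | omega | tauto
      have hr2 := ih (b - 1 - a).toNat (by omega) c2 a (i - 1) (b - 1) rfl ha2 (by omega) c2a c2b c2ones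
      rw [← hgc2] at hr2
      have heq : (fun x => if a ≤ x ∧ x ≤ b - 1 then (if x = a + (b - 1) - (i - 1) then 0 else 1)
          else c2 x) = (fun x => if a ≤ x ∧ x ≤ b then (if x = a + b - i then 0 else 1) else c x) := by
        funext x
        rcases eq_or_ne b x with rfl | hA
        · have hv : fire i cδ b = c b := f_o b (by omega) (by omega) (by omega)
          simp only [hc2, hgd, hv]
          split_ifs <;> first | omega | tauto
        by_cases hin : a ≤ x ∧ x ≤ b - 1
        · simp only [hc2, hgd]
          split_ifs <;> first | omega | tauto
        · have hv : fire i cδ x = c x := f_o x (by omega) (by omega) (by omega)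
          simp only [hc2, hgd, hv]
          split_ifs <;> first | omega | tauto
      rw [heq] at hr2
      exact Relation.ReflTransGen.head hstep (hr1'.trans hr2)
lemma sim_step (e : ℤ → ℕ) (j : ℤ) {c1 : ℤ → ℕ}
    (hs : Step (fun x => e x + if x = j then 1 else 0) c1) :
    ∃ e1 : ℤ → ℕ, ∃ j1 : ℤ, Relation.ReflTransGen Step (fun x => e x + if x = j + 1 then 1 else 0)
        (fun x => e1 x + if x = j1 + 1 then 1 else 0) ∧
      c1 = (fun x => e1 x + if x = j1 then 1 else 0) := by
  obtain ⟨k, hk⟩ := hs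
  have h2 : 2 ≤ e k + if k = j then 1 else 0 := hk.1
  have hc1 := fireAt_eq hk
  subst hc1
  rcases eq_or_ne j k with rfl | hkj
  · by_cases he : 2 ≤ e j
    · refine ⟨fire j e, j, ?_, fire_add _ he⟩
      refine Relation.ReflTransGen.single ?_
      have h' : 2 ≤ (fun x => e x + if x = j + 1 then 1 else 0) j := by
        show 2 ≤ e j + if j = j + 1 then 1 else 0
        split_ifs <;> omega
      have hst := step_fire (c := fun x => e x + if x = j + 1 then 1 else 0) (j := j) h'
      rwa [fire_add _ he] at hst
    · have hej : e j = 1 := by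
        rw [if_pos rfl] at h2; omega
      refine ⟨(fun x => if x = j then 0 else if x = j + 1 then e (j + 1) + 1 else e x),
        j - 1, ?_, ?_⟩
      · have heq : (fun x => e x + if x = j + 1 then 1 else 0)
            = (fun x => (if x = j then 0 else if x = j + 1 then e (j + 1) + 1 else e x)
              + if x = j - 1 + 1 then 1 else 0) := by
          funext x
          rcases eq_or_ne j x with rfl | hA0
          · split_ifs <;> first | omega | tauto
          rcases eq_or_ne x (j + 1) with rfl | hB
          · split_ifs <;> first | omega | tauto
          · split_ifs <;> first | omega | tauto
        exact heq ▸ Relation.ReflTransGen.refl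
      · funext x
        rcases eq_or_ne j x with rfl | hA0
        · rw [fire_self]
          try simp only []
          split_ifs <;> first | omega | tauto
        have hA : x ≠ j := Ne.symm hA0
        rcases eq_or_ne x (j - 1) with rfl | hB
        · rw [fire_sub1]
          try simp only []
          split_ifs <;> first | omega | tauto
        rcases eq_or_ne x (j + 1) with rfl | hC
        · rw [fire_add1]
          try simp only []
          split_ifs <;> first | omega | tauto
        · rw [fire_other j _ hB hA hC]
          try simp only []
          split_ifs <;> first | omega | tauto
  · have hek : 2 ≤ e k := by rw [if_neg (Ne.symm hkj)] at h2; omega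
    refine ⟨fire k e, j, ?_, fire_add _ hek⟩
    refine Relation.ReflTransGen.single ?_
    have h' : 2 ≤ (fun x => e x + if x = j + 1 then 1 else 0) k := by
      show 2 ≤ e k + if k = j + 1 then 1 else 0
      split_ifs <;> omega
    have hst := step_fire (c := fun x => e x + if x = j + 1 then 1 else 0) (j := k) h'
    rwa [fire_add _ hek] at hst

lemma sim {c s : ℤ → ℕ} (h : Relation.ReflTransGen Step c s) :
    ∀ e : ℤ → ℕ, ∀ j : ℤ, c = (fun x => e x + if x = j then 1 else 0) →
    ∃ e1 : ℤ → ℕ, ∃ j1 : ℤ, Reaches (fun x => e x + if x = j + 1 then 1 else 0)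
        (fun x => e1 x + if x = j1 + 1 then 1 else 0) ∧
      s = (fun x => e1 x + if x = j1 then 1 else 0) := by
  induction h using Relation.ReflTransGen.head_induction_on with
  | refl => exact fun e j hc => ⟨e, j, Relation.ReflTransGen.refl, hc⟩
  | head hstep _ ih =>
    intro e j hc
    subst hc
    obtain ⟨e1, j1, hd, hc1⟩ := sim_step e j hstep
    obtain ⟨e2, j2, hd2, hs2⟩ := ih e1 j1 hc1
    exact ⟨e2, j2, hd.trans hd2, hs2⟩

lemma step_support {c c1 : ℤ → ℕ} (h : Step c c1) (hf : (Function.support c).Finite) :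
    (Function.support c1).Finite := by
  obtain ⟨j, hj⟩ := h
  rw [fireAt_eq hj]
  refine Set.Finite.subset (hf.union ((Set.finite_singleton (j + 1)).insert (j - 1))) ?_
  intro x hx
  simp only [Function.mem_support, fire] at hx
  by_cases h1 : x = j - 1 ∨ x = j + 1
  · rcases h1 with rfl | rfl
    · exact Or.inr (Set.mem_insert _ _)
    · exact Or.inr (Set.mem_insert_of_mem _ rfl)
  · left
    rw [if_neg h1] at hx
    simp only [Function.mem_support]
    by_cases h2 : x = j
    · subst h2; rw [if_pos rfl] at hx; omega
    · rw [if_neg h2] at hx; exact hx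

lemma reaches_support {c s : ℤ → ℕ} (h : Reaches c s) (hf : (Function.support c).Finite) :
    (Function.support s).Finite := by
  induction h with
  | refl => exact hf
  | tail _ hstep ih => exact step_support hstep ih
theorem stmt_13 (c' : ℤ → ℕ) (hc' : (Function.support c').Finite) (i : ℤ)
    (c d : ℤ → ℕ)
    (hc : c = fun x => c' x + (if x = i then 1 else 0))
    (hd : d = fun x => c' x + (if x = i + 1 then 1 else 0))
    (sc sd : ℤ → ℕ)
    (hsc : Reaches c sc) (hscs : Stable sc)
    (hsd : Reaches d sd) (hsds : Stable sd) :
    ∃ (e : ℤ → ℕ) (j : ℤ),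
      sc = (fun x => e x + (if x = j then 1 else 0)) ∧
      sd = (fun x => e x + (if x = j + 1 then 1 else 0)) := by
  subst hc; subst hd
  have hfc : (Function.support (fun x => c' x + (if x = i then 1 else 0))).Finite := by
    refine Set.Finite.subset (hc'.union (Set.finite_singleton i)) ?_
    intro x hx
    simp only [Function.mem_support] at hx
    by_cases hxi : x = i
    · exact Or.inr hxi
    · rw [if_neg hxi, add_zero] at hx
      exact Or.inl hx
  have hsc_fin : (Function.support sc).Finite := reaches_support hsc hfc
  obtain ⟨e, m, hd_reach, hsc_eq⟩ := sim hsc c' i rfl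
  have hscx : ∀ y, sc y = e y + (if y = m then 1 else 0) := fun y => by rw [hsc_eq]
  have hem : e m = 0 := by
    have h := hscs m
    rw [hscx m, if_pos rfl] at h
    omega
  have hestable : ∀ x, e x ≤ 1 := by
    intro x
    have h := hscs x
    rw [hscx x] at h
    split_ifs at h <;> omega
  by_cases hem1 : e (m + 1) = 0
  · have hstable : Stable (fun x => e x + if x = m + 1 then 1 else 0) := by
      intro x
      show e x + (if x = m + 1 then 1 else 0) ≤ 1
      have := hestable x
      split_ifs with h
      · rw [h, hem1]
      · omega
    have hsd_eq := stab_unique hsd hd_reach hsds hstable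
    exact ⟨e, m, hsc_eq, hsd_eq⟩
  · have hem1' : e (m + 1) = 1 := by have := hestable (m + 1); omega
    have hef : (Function.support e).Finite := by
      refine hsc_fin.subset ?_
      intro x hx
      simp only [Function.mem_support] at hx ⊢
      rw [hscx x]
      split_ifs <;> omega
    obtain ⟨B, hB⟩ := hef.bddAbove
    have hex : ∃ z : ℤ, m + 1 < z ∧ e z = 0 := by
      refine ⟨max B (m + 1) + 1, by have := le_max_right B (m + 1); omega, ?_⟩
      by_contra h0
      have hmem : (max B (m + 1) + 1) ∈ Function.support e := Function.mem_support.mpr h0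
      have h1 := hB hmem
      have h2 := le_max_left B (m + 1)
      omega
    obtain ⟨b, ⟨hbgt, hb0⟩, hleast⟩ := Int.exists_least_of_bdd
      (P := fun z => m + 1 < z ∧ e z = 0) ⟨m + 2, fun z hz => by omega⟩ hex
    have hones : ∀ x, m < x → x < b → e x = 1 := by
      intro x hx1 hx2
      rcases eq_or_ne x (m + 1) with rfl | hxm
      · exact hem1'
      · have hne : e x ≠ 0 := fun h0 => by have := hleast x ⟨by omega, h0⟩; omega
        have := hestable x
        omega
    have hmain := main_cascade (b - m).toNat e m (m + 1) b rfl (by omega) hbgt hem hb0 hones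
    have hTstable : Stable (fun x => if m ≤ x ∧ x ≤ b then
        (if x = m + b - (m + 1) then 0 else 1) else e x) := by
      intro x
      show (if m ≤ x ∧ x ≤ b then (if x = m + b - (m + 1) then 0 else 1) else e x) ≤ 1
      have := hestable x
      split_ifs <;> omega
    have hsd_eq := stab_unique hsd (hd_reach.trans hmain) hsds hTstable
    have hbm : e (b - 1) = 1 := hones (b - 1) (by omega) (by omega)
    refine ⟨fun x => if x = b - 1 then 0 else sc x, b - 1, ?_, ?_⟩
    · funext x
      simp only []
      rcases eq_or_ne x (b - 1) with rfl | hA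
      · rw [hscx (b - 1)]
        split_ifs <;> omega
      · rw [hscx x]
        split_ifs <;> omega
    · rw [hsd_eq]
      funext x
      simp only []
      rcases eq_or_ne x (b - 1) with rfl | hA
      · rw [hscx (b - 1)]
        split_ifs <;> omega
      rcases eq_or_ne b x with rfl | hB
      · rw [hscx b]
        split_ifs <;> omega
      by_cases hin : m ≤ x ∧ x ≤ b
      · rcases eq_or_ne m x with rfl | hxm
        · rw [hscx m]
          split_ifs <;> omega
        · have h1 := hones x (by omega) (by omega)
          rw [hscx x]
          split_ifs <;> omega
      · rw [hscx x]
        split_ifs <;> omega
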